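/- arXiv:2507.09057 — 3 statements merged into one kernel-verified Lean document; each statement's English description precedes it below -/
import Mathlib

section
/- Let F be a CDF on ℝ, σ_b > 0, c > 0, and define h(z) = ∫_ℝ F(log c − b − z) · (1/σ_b) φ(b/σ_b) db, where φ is the standard Gaussian density. Then h is strictly decreasing on ℝ. -/
open Filter MeasureTheory

/-- The standard Gaussian density. -/
noncomputable def stdGaussPDF (x : ℝ) : ℝ :=
  (Real.sqrt (2 * Real.pi))⁻¹ * Real.exp (-x ^ 2 / 2)

/-!
The map is `z ↦ H (log c - z)` with `H t = ∫ F (t - b) g b db`, `g` the `N(0, σb²)` density, so it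
suffices that `H` is strictly increasing. For `t₁ < t₂` the integrand of `H t₂ - H t₁` is
nonnegative, and it is positive on an interval: a monotone `F` with `F (u + δ) ≤ F u` for all `u`
is `δ`-periodic, hence constant, contradicting the limits `0` and `1`; and right-continuity at a
point `u` with `F u < F (u + δ)` keeps the strict inequality on some `[u, u')`.
-/

open Set Topology ProbabilityTheory

theorem Function.Periodic.eq_of_tendsto_atTop {α : Type*} [TopologicalSpace α] [T2Space α]
    {f : ℝ → α} {c : ℝ} {a : α} (hf : Function.Periodic f c) (hc : 0 < c)
    (hlim : Tendsto f atTop (𝓝 a)) (x : ℝ) : f x = a := by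
  have hshift : Tendsto (fun n : ℕ => x + n * c) atTop atTop :=
    tendsto_atTop_add_const_left _ x (tendsto_natCast_atTop_atTop.atTop_mul_const hc)
  refine tendsto_nhds_unique ?_ (hlim.comp hshift)
  simp only [Function.comp_def, hf.nat_mul _ x]
  exact tendsto_const_nhds

theorem Monotone.exists_lt_add_of_tendsto {F : ℝ → ℝ} {a b δ : ℝ} (hF : Monotone F)
    (hbot : Tendsto F atBot (𝓝 a)) (htop : Tendsto F atTop (𝓝 b)) (hab : a ≠ b) (hδ : 0 < δ) :
    ∃ u, F u < F (u + δ) := by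
  by_contra! h
  have hper : Function.Periodic F δ := fun u => le_antisymm (h u) (hF (by linarith))
  have hconst : F = fun _ => b := funext (hper.eq_of_tendsto_atTop hδ htop)
  rw [hconst, tendsto_const_nhds_iff] at hbot
  exact hab hbot.symm

theorem Monotone.exists_Ico_forall_lt_add {F : ℝ → ℝ} {u δ : ℝ} (hF : Monotone F)
    (hrc : ContinuousWithinAt F (Ici u) u) (hu : F u < F (u + δ)) :
    ∃ u' > u, ∀ v ∈ Ico u u', F v < F (v + δ) := by
  obtain ⟨u', hu', hlt⟩ :=
    mem_nhdsGE_iff_exists_Ico_subset.1 (hrc.eventually_lt_const hu)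
  exact ⟨u', hu', fun v hv => (hlt hv).trans_le (hF (by linarith [hv.1]))⟩

theorem Monotone.exists_Ioo_forall_lt_add {F : ℝ → ℝ} {a b δ : ℝ} (hF : Monotone F)
    (hrc : ∀ x, ContinuousWithinAt F (Ici x) x) (hbot : Tendsto F atBot (𝓝 a))
    (htop : Tendsto F atTop (𝓝 b)) (hab : a ≠ b) (hδ : 0 < δ) :
    ∃ u u', u < u' ∧ ∀ v ∈ Ioo u u', F v < F (v + δ) := by
  obtain ⟨u, hu⟩ := hF.exists_lt_add_of_tendsto hbot htop hab hδ
  obtain ⟨u', hu', hlt⟩ := hF.exists_Ico_forall_lt_add (hrc u) hu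
  exact ⟨u, u', hu', fun v hv => hlt v (Ioo_subset_Ico_self hv)⟩

theorem strictMono_integral_comp_sub_mul {F w : ℝ → ℝ} {C : ℝ} (hF : Monotone F)
    (hFC : ∀ x, ‖F x‖ ≤ C) (hinc : ∀ δ > 0, ∃ u u', u < u' ∧ ∀ v ∈ Ioo u u', F v < F (v + δ))
    (hw : ∀ b, 0 < w b) (hwi : Integrable w) :
    StrictMono fun t => ∫ b, F (t - b) * w b := by
  intro t₁ t₂ ht
  obtain ⟨u, u', hu, hlt⟩ := hinc (t₂ - t₁) (sub_pos.2 ht)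
  have hint (t : ℝ) : Integrable fun b => F (t - b) * w b :=
    hwi.bdd_mul (hF.measurable.comp (measurable_const.sub measurable_id)).aestronglyMeasurable
      (ae_of_all _ fun _ => hFC _)
  have hle (b : ℝ) : F (t₁ - b) * w b ≤ F (t₂ - b) * w b :=
    mul_le_mul_of_nonneg_right (hF (by linarith)) (hw b).le
  have hsupp : Ioo (t₁ - u') (t₁ - u) ⊆
      Function.support fun b => F (t₂ - b) * w b - F (t₁ - b) * w b := by
    intro b hb
    have hv := hlt (t₁ - b) ⟨by linarith [hb.2], by linarith [hb.1]⟩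
    rw [show t₁ - b + (t₂ - t₁) = t₂ - b by ring] at hv
    exact (sub_pos.2 (mul_lt_mul_of_pos_right hv (hw b))).ne'
  rw [← sub_pos, ← integral_sub (hint t₂) (hint t₁),
    integral_pos_iff_support_of_nonneg (fun b => sub_nonneg.2 (hle b)) ((hint t₂).sub (hint t₁))]
  refine lt_of_lt_of_le ?_ (measure_mono hsupp)
  simpa using hu

theorem inv_mul_stdGaussPDF_div {σ : ℝ} (hσ : 0 < σ) (b : ℝ) :
    σ⁻¹ * stdGaussPDF (b / σ) = gaussianPDFReal 0 (σ ^ 2).toNNReal b := by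
  have hstd : stdGaussPDF = gaussianPDFReal 0 1 := by
    ext x
    simp [stdGaussPDF, gaussianPDFReal]
  rw [hstd, div_eq_inv_mul, gaussianPDFReal_inv_mul hσ.ne', abs_of_pos hσ,
    inv_mul_cancel_left₀ hσ.ne', mul_zero, mul_one]
  congr 1
  ext
  simp [sq_nonneg]

theorem mixing_map_strictAnti_general (F : ℝ → ℝ) (σb c : ℝ) (hσ : 0 < σb)
    (hmono : Monotone F)
    (hrc : ∀ x : ℝ, ContinuousWithinAt F (Set.Ici x) x)
    (hbot : Tendsto F atBot (nhds 0))
    (htop : Tendsto F atTop (nhds 1)) :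
    StrictAnti (fun z : ℝ =>
      ∫ b : ℝ, F (Real.log c - b - z) * (σb⁻¹ * stdGaussPDF (b / σb))) := by
  have hF : ∀ x, ‖F x‖ ≤ 1 := fun x => by
    rw [Real.norm_of_nonneg (hmono.le_of_tendsto hbot x)]
    exact hmono.ge_of_tendsto htop x
  have hmix : StrictMono fun t =>
      ∫ b, F (t - b) * gaussianPDFReal 0 (σb ^ 2).toNNReal b :=
    strictMono_integral_comp_sub_mul hmono hF
      (fun _ hδ => hmono.exists_Ioo_forall_lt_add hrc hbot htop zero_ne_one hδ)
      (fun b => gaussianPDFReal_pos _ _ b (by simpa using hσ.ne'))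
      (integrable_gaussianPDFReal _ _)
  convert hmix.comp_strictAnti (fun _ _ h => sub_lt_sub_left h (Real.log c)) using 1
  refine funext fun z => integral_congr_ae (ae_of_all _ fun b => ?_)
  dsimp only
  rw [inv_mul_stdGaussPDF_div hσ, sub_right_comm]

/-- With `F` a CDF, `σb > 0`, `c > 0`, the function
`h(z) = ∫ F(log c − b − z) (1/σb) φ(b/σb) db` is strictly decreasing on ℝ. -/
theorem mixing_map_strictAnti (F : ℝ → ℝ) (σb c : ℝ) (hσ : 0 < σb) (hc : 0 < c)
    (hmono : Monotone F)
    (hrc : ∀ x : ℝ, ContinuousWithinAt F (Set.Ici x) x)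
    (hbot : Tendsto F atBot (nhds 0))
    (htop : Tendsto F atTop (nhds 1)) :
    StrictAnti (fun z : ℝ =>
      ∫ b : ℝ, F (Real.log c - b - z) * (σb⁻¹ * stdGaussPDF (b / σb))) :=
  mixing_map_strictAnti_general F σb c hσ hmono hrc hbot htop
end

section
/- Let m be an even positive integer, Z = [I_{m/2}; Ĩ_{m/2}]ᵀ the m × (m/2) matrix stacking the identity and the anti-diagonal (exchange) matrix with unit entries. If Σ_b, Σ_b′ are symmetric positive definite (m/2)×(m/2) matrices and σ², σ′² > 0 satisfy Z Σ_b Zᵀ + σ² I_m = Z Σ_b′ Zᵀ + σ′² I_m, then Σ_b = Σ_b′ and σ² = σ′². -/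
open Matrix

/-- The `2n × n` matrix stacking the `n × n` identity on top of the `n × n`
anti-diagonal (exchange) matrix with unit entries. -/
def stackMat (n : ℕ) : Matrix (Fin (2 * n)) (Fin n) ℝ :=
  fun i j => if (i : ℕ) = (j : ℕ) ∨ (i : ℕ) + (j : ℕ) = 2 * n - 1 then 1 else 0

/-- Key entry computation: `(Z S Zᵀ)_{p, 2n-1-q} = S_{p,q}`. -/
lemma stack_entry_eq (n : ℕ) (S : Matrix (Fin n) (Fin n) ℝ) (p q : Fin n) :
    (stackMat n * S * (stackMat n)ᵀ)
      ⟨p, by have := p.isLt; omega⟩ ⟨2 * n - 1 - q, by have := q.isLt; omega⟩ = S p q := by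
  have hp := p.isLt
  have hq := q.isLt
  have hZi : ∀ k : Fin n, stackMat n ⟨p, by omega⟩ k = if k = p then 1 else 0 := by
    intro k
    have hk := k.isLt
    unfold stackMat
    have : ((p : ℕ) = (k : ℕ) ∨ (p : ℕ) + (k : ℕ) = 2 * n - 1) ↔ k = p := by
      rw [Fin.ext_iff]; omega
    simp [this]
  have hZj : ∀ k : Fin n, stackMat n ⟨2 * n - 1 - q, by omega⟩ k = if k = q then 1 else 0 := by
    intro k
    have hk := k.isLt
    unfold stackMat
    have : ((2 * n - 1 - (q:ℕ)) = (k : ℕ) ∨ (2 * n - 1 - (q:ℕ)) + (k : ℕ) = 2 * n - 1) ↔ k = q := by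
      rw [Fin.ext_iff]; omega
    simp [this]
  simp only [Matrix.mul_apply, Matrix.transpose_apply, hZi, hZj, ite_mul, one_mul, zero_mul,
    mul_ite, mul_one, mul_zero, Finset.sum_ite_eq, Finset.sum_ite_eq', Finset.mem_univ, if_true]

/-- Identifiability of variance components. With `Z = [I_n; Ĩ_n]ᵀ`,
if `Z Σ_b Zᵀ + σ² I = Z Σ_b' Zᵀ + σ'² I` for symmetric positive definite `Σ_b, Σ_b'`
and `σ², σ'² > 0`, then `Σ_b = Σ_b'` and `σ² = σ'²`. -/
theorem variance_components_identifiable (n : ℕ) (hn : 0 < n)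
    (Sb Sb' : Matrix (Fin n) (Fin n) ℝ)
    (hS : Sb.PosDef) (hS' : Sb'.PosDef)
    (σ2 σ2' : ℝ) (hσ : 0 < σ2) (hσ' : 0 < σ2')
    (heq : stackMat n * Sb * (stackMat n)ᵀ + σ2 • (1 : Matrix (Fin (2 * n)) (Fin (2 * n)) ℝ)
         = stackMat n * Sb' * (stackMat n)ᵀ + σ2' • 1) :
    Sb = Sb' ∧ σ2 = σ2' := by
  have hSeq : Sb = Sb' := by
    ext p q
    have hp := p.isLt
    have hq := q.isLt
    have h := congrFun (congrFun heq ⟨p, by omega⟩) ⟨2 * n - 1 - q, by omega⟩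
    have hne : (⟨(p : ℕ), by omega⟩ : Fin (2 * n)) ≠ ⟨2 * n - 1 - q, by omega⟩ := by
      rw [Fin.ne_iff_vne]; simp; omega
    simpa [Matrix.add_apply, Matrix.smul_apply, Matrix.one_apply, hne,
      stack_entry_eq n Sb p q, stack_entry_eq n Sb' p q] using h
  refine ⟨hSeq, ?_⟩
  rw [hSeq] at heq
  have h2 := add_left_cancel heq
  have h := congrFun (congrFun h2 ⟨0, by omega⟩) ⟨0, by omega⟩
  simpa [Matrix.smul_apply, Matrix.one_apply] using h
end

section
/- Let g₁, g₂ : [−1,1] → ℝ be continuous monotone nondecreasing functions with g₁(−1) = g₂(−1) = 0, and β₁, β₂ ∈ ℝ^p unit vectors. If g₁(xᵀβ₁) = g₂(xᵀβ₂) for all x in the closed unit ball of ℝ^p, and g₁ is non-constant, then β₁ = β₂ and g₁ = g₂ on [−1,1]. -/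
/-!
With `c = ⟪β₁, β₂⟫`, testing the hypothesis at `x = u • β₁` and `x = u • β₂` gives
`g₁ u = g₂ (c u)` and `g₂ u = g₁ (c u)`, hence `g₁ u = g₁ (c² u)`. If `|c| < 1`, iterating and
letting `c²ⁿ u → 0` makes `g₁` constant by continuity at `0`; if `c = -1`, then `g₁ u = g₂ (-u)`
is antitone. Both contradict the non-constancy of `g₁`, so `c = 1`, i.e. `β₁ = β₂`.
-/

open Set Filter Topology

theorem ContinuousWithinAt.apply_eq_apply_zero_of_smul_invariant {E α : Type*}
    [NormedAddCommGroup E] [NormedSpace ℝ E] [TopologicalSpace α] [T2Space α]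
    {f : E → α} {s : Set E} {r : ℝ} (hf : ContinuousWithinAt f s 0) (hr : |r| < 1)
    (hs : ∀ u ∈ s, r • u ∈ s) (h : ∀ u ∈ s, f (r • u) = f u) {u : E} (hu : u ∈ s) :
    f u = f 0 := by
  have hmem : ∀ n : ℕ, r ^ n • u ∈ s := by
    intro n
    induction n with
    | zero => simpa using hu
    | succ n ih => rw [pow_succ', mul_smul]; exact hs _ ih
  have hconst : ∀ n : ℕ, f (r ^ n • u) = f u := by
    intro n
    induction n with
    | zero => simp
    | succ n ih => rw [pow_succ', mul_smul, h _ (hmem n), ih]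
  have hlim : Tendsto (fun n : ℕ => r ^ n • u) atTop (𝓝[s] 0) :=
    tendsto_nhdsWithin_iff.2
      ⟨by simpa using (tendsto_pow_atTop_nhds_zero_of_abs_lt_one hr).smul_const u,
        Eventually.of_forall hmem⟩
  exact tendsto_nhds_unique (tendsto_const_nhds.congr fun n => (hconst n).symm)
    (hf.tendsto.comp hlim)

theorem mul_mem_Icc_neg_one_one {c u : ℝ} (hc : |c| ≤ 1) (hu : u ∈ Icc (-1 : ℝ) 1) :
    c * u ∈ Icc (-1 : ℝ) 1 :=
  abs_le.1 <| by
    rw [abs_mul]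
    exact mul_le_one₀ hc (abs_nonneg u) (abs_le.2 hu)

theorem apply_eq_apply_inner_mul_of_forall_norm_le_one {E α : Type*} [NormedAddCommGroup E]
    [InnerProductSpace ℝ E] {f₁ f₂ : ℝ → α} {β₁ β₂ : E} (hβ₁ : ‖β₁‖ = 1)
    (heq : ∀ x : E, ‖x‖ ≤ 1 → f₁ (inner ℝ x β₁) = f₂ (inner ℝ x β₂)) {u : ℝ}
    (hu : u ∈ Icc (-1 : ℝ) 1) :
    f₁ u = f₂ (inner ℝ β₁ β₂ * u) := by
  have hnorm : ‖u • β₁‖ ≤ 1 := by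
    rw [norm_smul, hβ₁, mul_one, Real.norm_eq_abs]
    exact abs_le.2 hu
  have h := heq (u • β₁) hnorm
  rwa [real_inner_smul_left, real_inner_smul_left, real_inner_self_eq_norm_sq, hβ₁, one_pow,
    mul_one, mul_comm] at h

theorem eq_one_of_apply_eq_apply_mul {g₁ g₂ : ℝ → ℝ} {c s t : ℝ} (hc : |c| ≤ 1)
    (hg₁ : ContinuousWithinAt g₁ (Icc (-1 : ℝ) 1) 0) (hg₂ : MonotoneOn g₂ (Icc (-1 : ℝ) 1))
    (h₁₂ : ∀ u ∈ Icc (-1 : ℝ) 1, g₁ u = g₂ (c * u))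
    (h₂₁ : ∀ u ∈ Icc (-1 : ℝ) 1, g₂ u = g₁ (c * u))
    (hs : s ∈ Icc (-1 : ℝ) 1) (ht : t ∈ Icc (-1 : ℝ) 1) (hst : s < t) (hlt : g₁ s < g₁ t) :
    c = 1 := by
  have hc_ne_neg_one : c ≠ -1 := by
    intro h
    have hanti := hg₂ (mul_mem_Icc_neg_one_one hc ht) (mul_mem_Icc_neg_one_one hc hs)
      (by rw [h]; linarith)
    rw [← h₁₂ t ht, ← h₁₂ s hs] at hanti
    linarith
  by_contra hc_ne_one
  have hc_lt : |c| < 1 := abs_lt.2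
    ⟨(abs_le.1 hc).1.lt_of_ne (Ne.symm hc_ne_neg_one), (abs_le.1 hc).2.lt_of_ne hc_ne_one⟩
  have hc_sq : |c * c| < 1 := by
    rw [abs_mul]
    exact mul_lt_one_of_nonneg_of_lt_one_left (abs_nonneg c) hc_lt hc
  have hconst : ∀ u ∈ Icc (-1 : ℝ) 1, g₁ u = g₁ 0 := fun u hu =>
    hg₁.apply_eq_apply_zero_of_smul_invariant hc_sq
      (fun v hv => mul_mem_Icc_neg_one_one hc_sq.le hv)
      (fun v hv => by
        rw [smul_eq_mul, mul_assoc, ← h₂₁ _ (mul_mem_Icc_neg_one_one hc hv), ← h₁₂ v hv])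
      hu
  linarith [hconst s hs, hconst t ht]

theorem monotone_sim_identifiable_general (p : ℕ)
    (g₁ g₂ : ℝ → ℝ) (β₁ β₂ : EuclideanSpace ℝ (Fin p))
    (hc₁ : ContinuousOn g₁ (Set.Icc (-1 : ℝ) 1))
    (hm₂ : MonotoneOn g₂ (Set.Icc (-1 : ℝ) 1))
    (hβ₁ : ‖β₁‖ = 1) (hβ₂ : ‖β₂‖ = 1)
    (heq : ∀ x : EuclideanSpace ℝ (Fin p), ‖x‖ ≤ 1 →
      g₁ (inner ℝ x β₁ : ℝ) = g₂ (inner ℝ x β₂ : ℝ))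
    (hnc : ∃ s ∈ Set.Icc (-1 : ℝ) 1, ∃ t ∈ Set.Icc (-1 : ℝ) 1, s < t ∧ g₁ s < g₁ t) :
    β₁ = β₂ ∧ ∀ u ∈ Set.Icc (-1 : ℝ) 1, g₁ u = g₂ u := by
  obtain ⟨s, hs, t, ht, hst, hlt⟩ := hnc
  have h₁₂ : ∀ u ∈ Icc (-1 : ℝ) 1, g₁ u = g₂ (inner ℝ β₁ β₂ * u) := fun u hu =>
    apply_eq_apply_inner_mul_of_forall_norm_le_one hβ₁ heq hu
  have h₂₁ : ∀ u ∈ Icc (-1 : ℝ) 1, g₂ u = g₁ (inner ℝ β₁ β₂ * u) := fun u hu => by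
    rw [real_inner_comm]
    exact apply_eq_apply_inner_mul_of_forall_norm_le_one hβ₂ (fun x hx => (heq x hx).symm) hu
  have hc : |inner ℝ β₁ β₂| ≤ 1 := by simpa [hβ₁, hβ₂] using abs_real_inner_le_norm β₁ β₂
  have hc_eq_one : inner ℝ β₁ β₂ = 1 := eq_one_of_apply_eq_apply_mul hc
    (hc₁ 0 ⟨by norm_num, by norm_num⟩) hm₂ h₁₂ h₂₁ hs ht hst hlt
  exact ⟨(inner_eq_one_iff_of_norm_eq_one hβ₁ hβ₂).1 hc_eq_one,
    fun u hu => by simpa [hc_eq_one] using h₁₂ u hu⟩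

/-- Identifiability of the monotone single index model. If `g₁, g₂` are
continuous monotone nondecreasing on `[−1,1]` with `g₁(−1) = g₂(−1) = 0`, `β₁, β₂` are
unit vectors in `ℝᵖ`, `g₁(xᵀβ₁) = g₂(xᵀβ₂)` for all `x` in the closed unit ball, and
`g₁` is non-constant, then `β₁ = β₂` and `g₁ = g₂` on `[−1,1]`. -/
theorem monotone_sim_identifiable (p : ℕ)
    (g₁ g₂ : ℝ → ℝ) (β₁ β₂ : EuclideanSpace ℝ (Fin p))
    (hc₁ : ContinuousOn g₁ (Set.Icc (-1 : ℝ) 1)) (hc₂ : ContinuousOn g₂ (Set.Icc (-1 : ℝ) 1))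
    (hm₁ : MonotoneOn g₁ (Set.Icc (-1 : ℝ) 1)) (hm₂ : MonotoneOn g₂ (Set.Icc (-1 : ℝ) 1))
    (h0₁ : g₁ (-1) = 0) (h0₂ : g₂ (-1) = 0)
    (hβ₁ : ‖β₁‖ = 1) (hβ₂ : ‖β₂‖ = 1)
    (heq : ∀ x : EuclideanSpace ℝ (Fin p), ‖x‖ ≤ 1 →
      g₁ (inner ℝ x β₁ : ℝ) = g₂ (inner ℝ x β₂ : ℝ))
    (hnc : ∃ s ∈ Set.Icc (-1 : ℝ) 1, ∃ t ∈ Set.Icc (-1 : ℝ) 1, s < t ∧ g₁ s < g₁ t) :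
    β₁ = β₂ ∧ ∀ u ∈ Set.Icc (-1 : ℝ) 1, g₁ u = g₂ u :=
  monotone_sim_identifiable_general p g₁ g₂ β₁ β₂ hc₁ hm₂ hβ₁ hβ₂ heq hnc
end
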